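/- arXiv:2504.14713 — 2 statements merged into one kernel-verified Lean document; each statement's English description precedes it below -/
import Mathlib

section
/- Let n ≥ 2. The set of derangements of [n] whose flattened form avoids the vincular pattern 31-2 and whose flattened form has second letter equal to n consists of exactly one element, namely the n-cycle whose flattened form is 1, n, n-1, ..., 2. -/
open Finset Polynomial

open scoped Classical

/-- Auxiliary function: walk along the cycles of `π` in standard cycle form order,
starting from `cur`, having already visited `visited`, with `fuel` steps remaining. -/
def flatAux {n : ℕ} (π : Equiv.Perm (Fin n)) : ℕ → Fin n → Finset (Fin n) → List (Fin n)
  | 0, _, _ => []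
  | fuel+1, cur, visited =>
    cur ::
      (if π cur ∈ insert cur visited then
        (if h : (Finset.univ \ insert cur visited).Nonempty then
          flatAux π fuel ((Finset.univ \ insert cur visited).min' h) (insert cur visited)
        else [])
      else flatAux π fuel (π cur) (insert cur visited))

/-- The flattened form of a permutation of `{1,...,n}` (represented on `Fin n`):
write the standard cycle form (each cycle starting with its least element, cycles in
increasing order of least elements), erase parentheses, and read the word with
letters `1,...,n`. -/
def flat {n : ℕ} (π : Equiv.Perm (Fin n)) : List ℕ :=
  if h : 0 < n then (flatAux π n ⟨0, h⟩ ∅).map (fun x => (x : ℕ) + 1) else []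

/-- A derangement: a fixed-point-free permutation. -/
def isDerangement {n : ℕ} (π : Equiv.Perm (Fin n)) : Prop := ∀ i, π i ≠ i

/-- Number of (disjoint, nontrivial) cycles of a permutation. -/
def numCycles {n : ℕ} (π : Equiv.Perm (Fin n)) : ℕ := π.cycleType.card

def contains31_2 (w : List ℕ) : Prop :=
  ∃ i j : Fin w.length, (i : ℕ) + 1 < (j : ℕ) ∧
    w.getD ((i : ℕ) + 1) 0 < w.getD (j : ℕ) 0 ∧ w.getD (j : ℕ) 0 < w.getD (i : ℕ) 0

namespace Stmt17

variable {n : ℕ}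

/-- shorthand -/
def fN (n : ℕ) [NeZero n] (k : ℕ) : Fin n := Fin.ofNat n k

lemma fN_val [NeZero n] {k : ℕ} (h : k < n) : (fN n k).val = k := by
  simp [fN, Fin.ofNat, Nat.mod_eq_of_lt h]

/-- the visited set after walking down to `k` -/
def Vv (n k : ℕ) : Finset (Fin n) :=
  Finset.univ.filter (fun x => (x : ℕ) = 0 ∨ k < (x : ℕ))

lemma mem_Vv {k : ℕ} {x : Fin n} : x ∈ Vv n k ↔ (x : ℕ) = 0 ∨ k < (x : ℕ) := by
  simp [Vv]

/-- the descending list k, k-1, ..., 1 -/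
def Dl (n : ℕ) [NeZero n] (k : ℕ) : List (Fin n) :=
  (List.range' 1 k).reverse.map (Fin.ofNat n)

lemma Dl_succ [NeZero n] (k : ℕ) : Dl n (k+1) = fN n (k+1) :: Dl n k := by
  rw [Dl, List.range'_concat, List.reverse_append]
  simp [Dl, fN, Nat.add_comm]

lemma Dl_length [NeZero n] (k : ℕ) : (Dl n k).length = k := by simp [Dl]

lemma flatAux_succ (π : Equiv.Perm (Fin n)) (fuel : ℕ) (cur : Fin n) (vis : Finset (Fin n)) :
    flatAux π (fuel+1) cur vis = cur ::
      (if π cur ∈ insert cur vis then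
        (if h : (Finset.univ \ insert cur vis).Nonempty then
          flatAux π fuel ((Finset.univ \ insert cur vis).min' h) (insert cur vis)
        else [])
      else flatAux π fuel (π cur) (insert cur vis)) := rfl

lemma flatAux_head {π : Equiv.Perm (Fin n)} {fuel : ℕ} {cur : Fin n} {vis : Finset (Fin n)}
    {a : Fin n} {l : List (Fin n)} (hf : 1 ≤ fuel)
    (h : flatAux π fuel cur vis = a :: l) : cur = a := by
  cases fuel with
  | zero => omega
  | succ m =>
    rw [flatAux_succ] at h
    exact (List.cons_eq_cons.mp h).1

/-- the walk visits exactly the unvisited elements, each once -/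
lemma flatAux_cover (π : Equiv.Perm (Fin n)) :
    ∀ fuel (vis : Finset (Fin n)) (cur : Fin n), cur ∉ vis →
      fuel = (Finset.univ \ vis).card →
      (flatAux π fuel cur vis).Nodup ∧
        (flatAux π fuel cur vis).toFinset = Finset.univ \ vis := by
  intro fuel
  induction fuel with
  | zero =>
    intro vis cur hcur hcard
    have : cur ∈ Finset.univ \ vis := by simp [hcur]
    have := Finset.card_pos.mpr ⟨cur, this⟩
    omega
  | succ m ih =>
    intro vis cur hcur hcard
    have hcurmem : cur ∈ Finset.univ \ vis := by simp [hcur]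
    have hins : Finset.univ \ insert cur vis = (Finset.univ \ vis).erase cur := by
      ext x; simp only [Finset.mem_sdiff, Finset.mem_erase, Finset.mem_insert, Finset.mem_univ, true_and]; tauto
    have hcard' : m = (Finset.univ \ insert cur vis).card := by
      rw [hins, Finset.card_erase_of_mem hcurmem]; omega
    have key : ∀ cur' : Fin n, cur' ∉ insert cur vis →
        (cur :: flatAux π m cur' (insert cur vis)).Nodup ∧
          (cur :: flatAux π m cur' (insert cur vis)).toFinset = Finset.univ \ vis := by
      intro cur' hcur'
      obtain ⟨hnd, hts⟩ := ih (insert cur vis) cur' hcur' hcard'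
      constructor
      · refine List.nodup_cons.mpr ⟨?_, hnd⟩
        intro hmem
        have : cur ∈ Finset.univ \ insert cur vis := by
          rw [← hts]; exact List.mem_toFinset.mpr hmem
        simp at this
      · rw [List.toFinset_cons, hts]
        ext x
        simp [Finset.mem_sdiff, Finset.mem_insert]
        constructor
        · rintro (rfl | ⟨h1, h2⟩)
          · exact hcur
          · exact h2
        · intro hx
          by_cases hxc : x = cur
          · exact Or.inl hxc
          · exact Or.inr ⟨hxc, hx⟩
    rw [flatAux_succ]
    by_cases h1 : π cur ∈ insert cur vis
    · rw [if_pos h1]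
      by_cases h2 : (Finset.univ \ insert cur vis).Nonempty
      · rw [dif_pos h2]
        refine key _ ?_
        have := Finset.min'_mem _ h2
        rw [Finset.mem_sdiff] at this
        exact this.2
      · rw [dif_neg h2]
        rw [Finset.not_nonempty_iff_eq_empty] at h2
        constructor
        · simp
        · have : Finset.univ \ vis = insert cur (Finset.univ \ insert cur vis) := by
            rw [hins, Finset.insert_erase hcurmem]
          rw [this, h2]
          simp
    · rw [if_neg h1]
      exact key _ h1


lemma flat_eq {n : ℕ} (π : Equiv.Perm (Fin n)) (h : 0 < n) :
    flat π = (flatAux π n ⟨0, h⟩ ∅).map (fun x : Fin n => (x : ℕ) + 1) := by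
  rw [flat, dif_pos h]
  generalize flatAux π n ⟨0, h⟩ ∅ = l
  show List.map (fun x => x + 1) (l.flatMap fun (a : Fin n) => [(a:ℕ)]) = _
  rw [show (l.flatMap fun (a : Fin n) => [(a:ℕ)]) = l.map Fin.val by
    induction l with
    | nil => rfl
    | cons a t ih => simp [List.flatMap_cons, ih]]
  rw [List.map_map]
  rfl

/-! ### the canonical permutation σ : x ↦ x - 1 -/

lemma sigma_val [NeZero n] (hn : 2 ≤ n) (x : Fin n) :
    ((Equiv.subRight (1 : Fin n)) x).val = (n - 1 + x.val) % n := by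
  show (x - 1).val = _
  rw [Fin.sub_def]
  show (n - (1:Fin n).val + x.val) % n = _
  rw [Fin.val_one', Nat.mod_eq_of_lt (show 1 < n by omega)]

lemma sigma_zero [NeZero n] (hn : 2 ≤ n) :
    (Equiv.subRight (1 : Fin n)) ⟨0, by omega⟩ = fN n (n-1) := by
  apply Fin.ext
  rw [sigma_val hn, fN_val (by omega)]
  simp [Nat.mod_eq_of_lt (show n - 1 + 0 < n by omega)]

lemma sigma_succ [NeZero n] (hn : 2 ≤ n) {k : ℕ} (hk1 : 1 ≤ k) (hk2 : k ≤ n - 1) :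
    (Equiv.subRight (1 : Fin n)) (fN n k) = fN n (k-1) := by
  apply Fin.ext
  rw [sigma_val hn, fN_val (by omega), fN_val (by omega)]
  rw [Nat.mod_eq_sub_mod (by omega), Nat.mod_eq_of_lt (by omega)]
  omega

lemma sigma_derangement [NeZero n] (hn : 2 ≤ n) :
    isDerangement (Equiv.subRight (1 : Fin n)) := by
  intro i h
  have := sigma_val hn i
  rw [h] at this
  rcases Nat.eq_zero_or_pos i.val with h0 | h1
  · rw [h0] at this
    rw [Nat.mod_eq_of_lt (by omega)] at this
    omega
  · rw [Nat.mod_eq_sub_mod (by omega), Nat.mod_eq_of_lt (by omega)] at this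
    omega

lemma insert_fN_Vv [NeZero n] {k : ℕ} (hk1 : 1 ≤ k) (hk2 : k ≤ n - 1) :
    insert (fN n k) (Vv n k) = Vv n (k - 1) := by
  ext x
  simp only [Finset.mem_insert, mem_Vv]
  constructor
  · rintro (rfl | h0 | hlt)
    · right; rw [fN_val (by omega)]; omega
    · left; exact h0
    · right; omega
  · rintro (h0 | hlt)
    · right; left; exact h0
    · rcases Nat.lt_or_ge k x.val with h | h
      · right; right; exact h
      · left; apply Fin.ext; rw [fN_val (by omega)]; omega

/-- the walk of σ from position k -/
lemma sigma_walk [NeZero n] (hn : 2 ≤ n) :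
    ∀ k, 1 ≤ k → k ≤ n - 1 →
      flatAux (Equiv.subRight (1 : Fin n)) k (fN n k) (Vv n k) = Dl n k := by
  intro k
  induction k with
  | zero => omega
  | succ m ih =>
    intro _ hk2
    rcases Nat.eq_zero_or_pos m with rfl | hm
    · -- k = 1
      rw [flatAux_succ]
      have : Dl n 1 = [fN n 1] := by simp [Dl, fN]
      rw [this]
      by_cases h1 : (Equiv.subRight (1 : Fin n)) (fN n 1) ∈ insert (fN n 1) (Vv n 1)
      · rw [if_pos h1]
        by_cases h2 : (Finset.univ \ insert (fN n 1) (Vv n 1)).Nonempty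
        · rw [dif_pos h2]; rfl
        · rw [dif_neg h2]
      · rw [if_neg h1]; rfl
    · -- k = m+1, m ≥ 1
      rw [flatAux_succ]
      have hσ : (Equiv.subRight (1 : Fin n)) (fN n (m+1)) = fN n m := by
        have := sigma_succ hn (k := m+1) (by omega) hk2
        simpa using this
      have hnotmem : fN n m ∉ insert (fN n (m+1)) (Vv n (m+1)) := by
        simp only [Finset.mem_insert, mem_Vv]
        push_neg
        rw [fN_val (by omega)]
        refine ⟨?_, by omega, by omega⟩
        intro h
        have := congrArg Fin.val h
        rw [fN_val (by omega), fN_val (by omega)] at this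
        omega
      rw [hσ, if_neg hnotmem]
      have hins : insert (fN n (m+1)) (Vv n (m+1)) = Vv n m := by
        have := insert_fN_Vv (n := n) (k := m+1) (by omega) hk2
        simpa using this
      rw [hins, ih hm (by omega), Dl_succ]

lemma Vv_top [NeZero n] (hn : 2 ≤ n) :
    ({⟨0, by omega⟩} : Finset (Fin n)) = Vv n (n-1) := by
  ext x
  simp only [Finset.mem_singleton, mem_Vv]
  constructor
  · rintro rfl; left; rfl
  · rintro (h0 | hlt)
    · exact Fin.ext h0
    · omega

lemma sigma_flatAux [NeZero n] (hn : 2 ≤ n) :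
    flatAux (Equiv.subRight (1 : Fin n)) n ⟨0, by omega⟩ ∅ =
      ⟨0, by omega⟩ :: Dl n (n-1) := by
  obtain ⟨m, hm⟩ : ∃ m, n = m + 1 := ⟨n - 1, by omega⟩
  subst hm
  rw [flatAux_succ]
  have hσ0 : (Equiv.subRight (1 : Fin (m+1))) ⟨0, by omega⟩ = fN (m+1) (m+1-1) :=
    sigma_zero hn
  have hsing : insert (⟨0, by omega⟩ : Fin (m+1)) (∅ : Finset (Fin (m+1)))
      = {(⟨0, by omega⟩ : Fin (m+1))} := rfl
  have hnotmem : (Equiv.subRight (1 : Fin (m+1))) ⟨0, by omega⟩ ∉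
      insert (⟨0, by omega⟩ : Fin (m+1)) (∅ : Finset (Fin (m+1))) := by
    rw [hσ0, hsing, Finset.mem_singleton]
    intro h
    have := congrArg Fin.val h
    rw [fN_val (by omega)] at this
    simp at this
    omega
  rw [if_neg hnotmem, hσ0]
  have hV : insert (⟨0, by omega⟩ : Fin (m+1)) (∅ : Finset (Fin (m+1))) = Vv (m+1) (m+1-1) := by
    rw [hsing]; exact Vv_top hn
  rw [hV]
  exact congrArg (List.cons _) (sigma_walk hn (m+1-1) (by omega) (le_refl _))

/-- the target word -/
lemma Dl_map [NeZero n] (hn : 2 ≤ n) {k : ℕ} (hk : k ≤ n - 1) :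
    (Dl n k).map (fun x : Fin n => (x : ℕ) + 1) = (List.range' 2 k).reverse := by
  rw [Dl, List.map_map, List.map_reverse]
  congr 1
  have : ∀ i ∈ List.range' 1 k, ((fun x : Fin n => (x : ℕ) + 1) ∘ Fin.ofNat n) i = i + 1 := by
    intro i hi
    rw [List.mem_range'_1] at hi
    simp only [Function.comp_apply]
    rw [show (Fin.ofNat n i : ℕ) = (fN n i : ℕ) from rfl, fN_val (by omega)]
  rw [List.map_congr_left this]
  have := List.map_add_range' (a := 1) 1 k 1
  simp only [show (1:ℕ)+1 = 2 from rfl] at this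
  rw [← this]
  congr 1
  funext x
  omega

lemma sigma_flat [NeZero n] (hn : 2 ≤ n) :
    flat (Equiv.subRight (1 : Fin n)) = 1 :: (List.range' 2 (n-1)).reverse := by
  rw [flat_eq _ (show 0 < n by omega), sigma_flatAux hn, List.map_cons, Dl_map hn (le_refl _)]

/-! ### properties of `flat π` for any `π` -/

lemma flat_spec (hn : 2 ≤ n) (π : Equiv.Perm (Fin n)) :
    (flat π).length = n ∧ (flat π).Nodup ∧ (flat π).getD 0 0 = 1 ∧
      ∀ x ∈ flat π, 1 ≤ x ∧ x ≤ n := by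
  have h0 : 0 < n := by omega
  have hcard : n = (Finset.univ \ (∅ : Finset (Fin n))).card := by
    simp
  obtain ⟨hnd, hts⟩ := flatAux_cover π n ∅ ⟨0, h0⟩ (by simp) hcard
  have hlenA : (flatAux π n ⟨0, h0⟩ ∅).length = n := by
    rw [← List.toFinset_card_of_nodup hnd, hts]
    simp
  have hinj : Function.Injective (fun x : Fin n => (x : ℕ) + 1) := by
    intro a b h
    simp only [add_left_inj] at h
    exact Fin.val_injective h
  refine ⟨?_, ?_, ?_, ?_⟩
  · rw [flat_eq π h0, List.length_map, hlenA]
  · rw [flat_eq π h0]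
    exact hnd.map hinj
  · obtain ⟨m, rfl⟩ : ∃ m, n = m + 1 := ⟨n - 1, by omega⟩
    rw [flat_eq π h0, flatAux_succ]
    rfl
  · intro x hx
    rw [flat_eq π h0, List.mem_map] at hx
    obtain ⟨y, _, rfl⟩ := hx
    have := y.isLt
    omega

/-! ### the word is determined -/

lemma word_det (hn : 2 ≤ n) (w : List ℕ) (hlen : w.length = n) (hnd : w.Nodup)
    (h0 : w.getD 0 0 = 1) (hb : ∀ x ∈ w, 1 ≤ x ∧ x ≤ n) (h1 : w.getD 1 0 = n)
    (hav : ¬ contains31_2 w) : w = 1 :: (List.range' 2 (n-1)).reverse := by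
  have hmem : ∀ m, m < n → w.getD m 0 ∈ w := by
    intro m hm
    rw [List.getD_eq_getElem w 0 (show m < w.length by omega)]
    exact List.getElem_mem _
  have hdist : ∀ i j, i < n → j < n → i ≠ j → w.getD i 0 ≠ w.getD j 0 := by
    intro i j hi hj hne
    rw [List.getD_eq_getElem w 0 (show i < w.length by omega),
      List.getD_eq_getElem w 0 (show j < w.length by omega)]
    intro h
    exact hne ((hnd.getElem_inj_iff).mp h)
  have P : ∀ j, 1 ≤ j → j < n → ∀ m, j < m → m < n → w.getD m 0 < w.getD j 0 := by
    intro j hj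
    induction j, hj using Nat.le_induction with
    | base =>
      intro _ m hm1 hm2
      have hbm := hb _ (hmem m hm2)
      have hne := hdist m 1 hm2 (by omega) (by omega)
      omega
    | succ j hj ih =>
      intro hj1n m hm1 hm2
      have hA : w.getD m 0 < w.getD j 0 := ih (by omega) m (by omega) hm2
      have hne : w.getD (j+1) 0 ≠ w.getD m 0 := hdist _ _ (by omega) hm2 (by omega)
      by_contra hc
      push_neg at hc
      have hc' : w.getD (j+1) 0 < w.getD m 0 := by omega
      exact hav ⟨⟨j, by omega⟩, ⟨m, by omega⟩, by simpa using hm1, by simpa using hc',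
        by simpa using hA⟩
  have U : ∀ j, 1 ≤ j → j < n → w.getD j 0 + j ≤ n + 1 := by
    intro j hj
    induction j, hj using Nat.le_induction with
    | base => intro _; omega
    | succ j hj ih =>
      intro hj1n
      have h2 : w.getD (j+1) 0 < w.getD j 0 := P j hj (by omega) (j+1) (by omega) (by omega)
      have := ih (by omega)
      omega
  have Low : ∀ d, d < n - 1 → 2 + d ≤ w.getD (n-1-d) 0 := by
    intro d
    induction d with
    | zero =>
      intro _
      have h2 := hb _ (hmem (n-1-0) (by omega))
      have hne := hdist (n-1-0) 0 (by omega) (by omega) (by omega)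
      omega
    | succ d ihd =>
      intro hd
      have hP : w.getD (n-1-d) 0 < w.getD (n-1-(d+1)) 0 :=
        P (n-1-(d+1)) (by omega) (by omega) (n-1-d) (by omega) (by omega)
      have := ihd (by omega)
      omega
  have hval : ∀ j, 1 ≤ j → j < n → w.getD j 0 = n + 1 - j := by
    intro j hj1 hj2
    have hU := U j hj1 hj2
    have hL := Low (n-1-j) (by omega)
    rw [show n-1-(n-1-j) = j by omega] at hL
    omega
  apply List.ext_getElem
  · rw [hlen]
    simp only [List.length_cons, List.length_reverse, List.length_range']
    omega
  intro i h1i h2i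
  rcases Nat.eq_zero_or_pos i with rfl | hi1
  · rw [← List.getD_eq_getElem w 0 (show 0 < w.length by omega), h0]
    rfl
  · obtain ⟨i', rfl⟩ : ∃ i', i = i' + 1 := ⟨i - 1, by omega⟩
    have hiltn : i' + 1 < n := by omega
    rw [← List.getD_eq_getElem w 0 (show i'+1 < w.length by omega), hval (i'+1) (by omega) hiltn]
    rw [List.getElem_cons_succ]
    rw [List.getElem_reverse]
    rw [List.getElem_range']
    simp only [List.length_range'] at *
    have hi'' : i' < n - 1 := by
      simp only [List.length_cons, List.length_reverse, List.length_range'] at h2i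
      omega
    omega

/-! ### the target word avoids 31-2 -/

lemma target_len (hn : 2 ≤ n) : (1 :: (List.range' 2 (n-1)).reverse).length = n := by
  simp only [List.length_cons, List.length_reverse, List.length_range']
  omega

lemma target_getD (hn : 2 ≤ n) {m : ℕ} (h1 : 1 ≤ m) (h2 : m < n) :
    (1 :: (List.range' 2 (n-1)).reverse).getD m 0 = n + 1 - m := by
  obtain ⟨m', rfl⟩ : ∃ m', m = m' + 1 := ⟨m - 1, by omega⟩
  rw [List.getD_eq_getElem _ 0 (by rw [target_len hn]; omega)]
  rw [List.getElem_cons_succ, List.getElem_reverse, List.getElem_range']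
  simp only [List.length_range']
  omega

lemma target_avoid (hn : 2 ≤ n) : ¬ contains31_2 (1 :: (List.range' 2 (n-1)).reverse) := by
  rintro ⟨i, j, hij, hlt1, hlt2⟩
  have hl := target_len (n := n) hn
  have hi : (i : ℕ) < n := by have := i.isLt; omega
  have hj : (j : ℕ) < n := by have := j.isLt; omega
  have hjD := target_getD hn (m := (j : ℕ)) (by omega) hj
  rw [hjD] at hlt1 hlt2
  rcases Nat.eq_zero_or_pos (i : ℕ) with h0 | h1
  · rw [h0] at hlt2
    have : (1 :: (List.range' 2 (n-1)).reverse).getD 0 0 = 1 := rfl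
    rw [this] at hlt2
    omega
  · have hi1 := target_getD hn (m := (i : ℕ) + 1) (by omega) (by omega)
    have hiD := target_getD hn (m := (i : ℕ)) h1 hi
    rw [hi1] at hlt1
    rw [hiD] at hlt2
    omega

/-! ### extraction: recovering π from its flat word -/

lemma fN_one_mem_sdiff [NeZero n] (hn : 2 ≤ n) {k : ℕ} (hk : 2 ≤ k) (hk2 : k ≤ n - 1) :
    fN n 1 ∈ Finset.univ \ Vv n k := by
  simp only [Finset.mem_sdiff, Finset.mem_univ, true_and, mem_Vv]
  push_neg
  rw [fN_val (by omega)]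
  omega

lemma min'_sdiff_Vv [NeZero n] (hn : 2 ≤ n) {k : ℕ} (hk : 2 ≤ k) (hk2 : k ≤ n-1)
    (h : (Finset.univ \ Vv n k).Nonempty) :
    (Finset.univ \ Vv n k).min' h = fN n 1 := by
  apply le_antisymm
  · exact Finset.min'_le _ _ (fN_one_mem_sdiff hn hk hk2)
  · apply Finset.le_min'
    intro y hy
    simp only [Finset.mem_sdiff, Finset.mem_univ, true_and, mem_Vv] at hy
    push_neg at hy
    rw [Fin.le_def, fN_val (by omega)]
    omega

lemma walk_extract [NeZero n] (hn : 2 ≤ n) (π : Equiv.Perm (Fin n)) :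
    ∀ k, 2 ≤ k → k ≤ n - 1 →
      flatAux π k (fN n k) (Vv n k) = Dl n k →
      ∀ j, 3 ≤ j → j ≤ k → π (fN n j) = fN n (j-1) := by
  intro k hk
  induction k, hk using Nat.le_induction with
  | base => intro _ _ j h3 h2; omega
  | succ k hk ih =>
    intro hk2 hw j h3 hj
    rw [flatAux_succ, Dl_succ] at hw
    obtain ⟨-, hw⟩ := List.cons_eq_cons.mp hw
    have hins : insert (fN n (k+1)) (Vv n (k+1)) = Vv n k := insert_fN_Vv (by omega) hk2
    rw [hins] at hw
    have hkk : k = (k - 1) + 1 := by omega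
    by_cases hmem : π (fN n (k+1)) ∈ Vv n k
    · rw [if_pos hmem] at hw
      have hne : (Finset.univ \ Vv n k).Nonempty :=
        ⟨fN n 1, fN_one_mem_sdiff hn hk (by omega)⟩
      rw [dif_pos hne, min'_sdiff_Vv hn hk (by omega) hne] at hw
      rw [hkk, Dl_succ] at hw
      have h1 := flatAux_head (by omega) hw
      have h2 := congrArg Fin.val h1
      rw [fN_val (by omega), fN_val (by omega)] at h2
      omega
    · rw [if_neg hmem] at hw
      rw [hkk, Dl_succ] at hw
      have h1 := flatAux_head (by omega) hw
      have hhead : π (fN n (k+1)) = fN n k := by rw [hkk]; exact h1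
      rw [h1, ← Dl_succ, ← hkk] at hw
      rcases Nat.lt_or_ge j (k+1) with hlt | hge
      · exact ih (by omega) hw j h3 (by omega)
      · have hj' : j = k + 1 := by omega
        subst hj'
        exact hhead

lemma walk_first [NeZero n] (hn : 2 ≤ n) (π : Equiv.Perm (Fin n)) (hd : isDerangement π)
    (hw : flatAux π n ⟨0, by omega⟩ ∅ = ⟨0, by omega⟩ :: Dl n (n-1)) :
    π ⟨0, by omega⟩ = fN n (n-1) ∧
      (2 ≤ n - 1 → flatAux π (n-1) (fN n (n-1)) (Vv n (n-1)) = Dl n (n-1)) := by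
  obtain ⟨m, hm⟩ : ∃ m, n = m + 1 := ⟨n-1, by omega⟩
  subst hm
  rw [flatAux_succ] at hw
  obtain ⟨-, hw⟩ := List.cons_eq_cons.mp hw
  have hsing : insert (⟨0, by omega⟩ : Fin (m+1)) (∅ : Finset (Fin (m+1)))
      = {(⟨0, by omega⟩ : Fin (m+1))} := rfl
  have hmem : π ⟨0, by omega⟩ ∉ insert (⟨0, by omega⟩ : Fin (m+1)) (∅ : Finset (Fin (m+1))) := by
    rw [hsing, Finset.mem_singleton]
    exact hd _
  rw [if_neg hmem] at hw
  rw [show insert (⟨0, by omega⟩ : Fin (m+1)) (∅ : Finset (Fin (m+1))) = Vv (m+1) (m+1-1) by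
    rw [hsing]; exact Vv_top hn] at hw
  have hh : π ⟨0, by omega⟩ = fN (m+1) (m+1-1) := by
    have hkk : m+1-1 = (m+1-1-1)+1 := by omega
    rw [hkk, Dl_succ] at hw
    have h1 := flatAux_head (by omega) hw
    rw [h1]
    congr 1
    omega
  refine ⟨hh, fun _ => ?_⟩
  rw [← hh]
  exact hw

/-! ### a derangement with the given partial values is σ -/

lemma forced [NeZero n] (hn : 2 ≤ n) (π : Equiv.Perm (Fin n)) (hd : isDerangement π)
    (h0 : π ⟨0, by omega⟩ = fN n (n-1))
    (hk : ∀ j, 3 ≤ j → j ≤ n - 1 → π (fN n j) = fN n (j-1)) :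
    π = Equiv.subRight (1 : Fin n) := by
  have himg : ∀ x : Fin n, 2 ≤ (π x).val → (π x).val ≤ n - 2 → x.val = (π x).val + 1 := by
    intro x h2 h3
    have h := hk ((π x).val + 1) (by omega) (by omega)
    have he : fN n ((π x).val + 1 - 1) = π x := Fin.ext (by rw [fN_val (by omega)]; omega)
    rw [he] at h
    have := π.injective h
    have := congrArg Fin.val this
    rw [fN_val (by omega)] at this
    omega
  have himgtop : ∀ x : Fin n, (π x).val = n - 1 → x.val = 0 := by
    intro x h
    have he : π x = fN n (n-1) := Fin.ext (by rw [fN_val (by omega)]; exact h)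
    rw [← h0] at he
    have := π.injective he
    exact congrArg Fin.val this
  have h1 : π (fN n 1) = ⟨0, by omega⟩ := by
    by_contra hc
    have hv := (π (fN n 1)).isLt
    have hval0 : (π (fN n 1)).val ≠ 0 := fun h => hc (Fin.ext h)
    have hval1 : (π (fN n 1)).val ≠ 1 := fun h =>
      hd (fN n 1) (Fin.ext (by rw [h, fN_val (by omega)]))
    have hvaln1 : (π (fN n 1)).val ≠ n - 1 := by
      intro h
      have := himgtop _ h
      rw [fN_val (by omega)] at this
      omega
    by_cases hrange : 2 ≤ (π (fN n 1)).val ∧ (π (fN n 1)).val ≤ n - 2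
    · have := himg _ hrange.1 hrange.2
      rw [fN_val (by omega)] at this
      omega
    · omega
  have h2 : ∀ hn3 : 3 ≤ n, π (fN n 2) = fN n 1 := by
    intro hn3
    have hv := (π (fN n 2)).isLt
    have hval2 : (π (fN n 2)).val ≠ 2 := fun h =>
      hd (fN n 2) (Fin.ext (by rw [h, fN_val (by omega)]))
    have hval0 : (π (fN n 2)).val ≠ 0 := by
      intro h
      have he : π (fN n 2) = π (fN n 1) := by
        rw [h1]; exact Fin.ext h
      have := congrArg Fin.val (π.injective he)
      rw [fN_val (by omega), fN_val (by omega)] at this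
      omega
    have hvaln1 : (π (fN n 2)).val ≠ n - 1 := by
      intro h
      have := himgtop _ h
      rw [fN_val (by omega)] at this
      omega
    have hval1 : (π (fN n 2)).val = 1 := by
      by_cases hrange : 2 ≤ (π (fN n 2)).val ∧ (π (fN n 2)).val ≤ n - 2
      · have := himg _ hrange.1 hrange.2
        rw [fN_val (by omega)] at this
        omega
      · omega
    exact Fin.ext (by rw [hval1, fN_val (by omega)])
  apply Equiv.ext
  intro x
  have hx : x = fN n x.val := Fin.ext (fN_val x.isLt).symm
  have hxlt := x.isLt
  rcases Nat.eq_zero_or_pos x.val with hx0 | hx1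
  · have : x = ⟨0, by omega⟩ := Fin.ext hx0
    rw [this, h0, sigma_zero hn]
  · rcases Nat.lt_or_ge x.val 2 with hxa | hxb
    · have hxv : x.val = 1 := by omega
      have : x = fN n 1 := by rw [hx, hxv]
      rw [this, h1, sigma_succ hn (le_refl 1) (by omega)]
      refine Fin.ext ?_
      rw [fN_val (show (1:ℕ) - 1 < n by omega)]
    · rcases Nat.lt_or_ge x.val 3 with hxa2 | hxb2
      · have hxv : x.val = 2 := by omega
        have : x = fN n 2 := by rw [hx, hxv]
        rw [this, h2 (by omega), sigma_succ hn (by omega) (by omega)]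
      · rw [hx, hk x.val (by omega) (by omega), sigma_succ hn (by omega) (by omega)]

end Stmt17

theorem stmt_17 (n : ℕ) (hn : 2 ≤ n) :
    (Finset.univ.filter
        (fun π : Equiv.Perm (Fin n) =>
          isDerangement π ∧ ¬ contains31_2 (flat π) ∧ (flat π).getD 1 0 = n)).card = 1
    ∧ ∀ π ∈ Finset.univ.filter
        (fun π : Equiv.Perm (Fin n) =>
          isDerangement π ∧ ¬ contains31_2 (flat π) ∧ (flat π).getD 1 0 = n),
        flat π = 1 :: (List.range' 2 (n - 1)).reverse := by
  haveI : NeZero n := ⟨by omega⟩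
  set σ := Equiv.subRight (1 : Fin n) with hσdef
  have hσflat : flat σ = 1 :: (List.range' 2 (n-1)).reverse := Stmt17.sigma_flat hn
  have hmem_word : ∀ π : Equiv.Perm (Fin n),
      (isDerangement π ∧ ¬ contains31_2 (flat π) ∧ (flat π).getD 1 0 = n) →
      flat π = 1 :: (List.range' 2 (n-1)).reverse := by
    rintro π ⟨hd, hav, h1⟩
    obtain ⟨hlen, hnd, h0, hb⟩ := Stmt17.flat_spec hn π
    exact Stmt17.word_det hn _ hlen hnd h0 hb h1 hav
  have huniq : ∀ π : Equiv.Perm (Fin n), isDerangement π →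
      flat π = 1 :: (List.range' 2 (n-1)).reverse → π = σ := by
    intro π hd hf
    have hff : flat π = flat σ := by rw [hf, hσflat]
    have h0n : (0:ℕ) < n := by omega
    have hA : flatAux π n ⟨0, h0n⟩ ∅ = ⟨0, h0n⟩ :: Stmt17.Dl n (n-1) := by
      rw [Stmt17.flat_eq π h0n, Stmt17.flat_eq σ h0n, Stmt17.sigma_flatAux hn] at hff
      have hinj : Function.Injective (fun x : Fin n => (x:ℕ)+1) := by
        intro a b h
        simp only [add_left_inj] at h
        exact Fin.val_injective h
      exact List.map_injective_iff.mpr hinj hff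
    obtain ⟨hp0, hrest⟩ := Stmt17.walk_first hn π hd hA
    apply Stmt17.forced hn π hd hp0
    intro j h3 hj
    exact Stmt17.walk_extract hn π (n-1) (by omega) (le_refl _) (hrest (by omega)) j h3 hj
  have hσmem : isDerangement σ ∧ ¬ contains31_2 (flat σ) ∧ (flat σ).getD 1 0 = n := by
    refine ⟨Stmt17.sigma_derangement hn, ?_, ?_⟩
    · rw [hσflat]
      exact Stmt17.target_avoid hn
    · rw [hσflat, Stmt17.target_getD hn (le_refl 1) (by omega)]
      omega
  constructor
  · rw [Finset.card_eq_one]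
    refine ⟨σ, ?_⟩
    ext π
    simp only [Finset.mem_filter, Finset.mem_univ, true_and, Finset.mem_singleton]
    constructor
    · rintro ⟨hd, hav, h1⟩
      exact huniq π hd (hmem_word π ⟨hd, hav, h1⟩)
    · rintro rfl
      exact hσmem
  · intro π hπ
    simp only [Finset.mem_filter, Finset.mem_univ, true_and] at hπ
    exact hmem_word π hπ
end

section
/- Define a_2 = y/2, a_3 = -y/6 and a_{n+2} = ((y + (y+1)n)/((n+1)(n+2)))·a_n - (n/(n+2))·a_{n+1} for n ≥ 2, as rational functions (polynomials in y with rational coefficients). Then for all n ≥ 2, a_n = (y/n!)·det(M_{n-2}), where M_0 is the empty matrix with det(M_0) = 1 and M_k is the k×k tridiagonal matrix with diagonal entries -1, -2, ..., -k, superdiagonal entries -3, -4, ..., -(k+1), and subdiagonal entries y + 2/3, y + 3/4, ..., y + k/(k+1). -/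
open Polynomial

/-- The k×k tridiagonal matrix M_k: diagonal -1,...,-k, superdiagonal -3,...,-(k+1),
subdiagonal y+2/3,...,y+k/(k+1) (0-indexed here). -/
noncomputable def M23 (k : ℕ) : Matrix (Fin k) (Fin k) (Polynomial ℚ) := fun i j =>
  if (j : ℕ) = (i : ℕ) then -Polynomial.C ((i : ℚ) + 1)
  else if (j : ℕ) = (i : ℕ) + 1 then -Polynomial.C ((i : ℚ) + 3)
  else if (i : ℕ) = (j : ℕ) + 1 then Polynomial.X + Polynomial.C (((j : ℚ) + 2) / ((j : ℚ) + 3))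
  else 0

open Matrix in
section

lemma M23_ext {k m : ℕ} (i j : Fin k) (i' j' : Fin m) (hi : (i:ℕ) = (i':ℕ)) (hj : (j:ℕ) = (j':ℕ)) :
    M23 k i j = M23 m i' j' := by
  simp only [M23, hi, hj]

lemma M23_sub (k : ℕ) :
    ((M23 (k+1)).submatrix Fin.castSucc Fin.castSucc) = M23 k := by
  apply Matrix.ext
  intro i j
  rw [Matrix.submatrix_apply]
  exact M23_ext _ _ _ _ rfl rfl

lemma M23_zero {k : ℕ} (i j : Fin k) (h1 : (j:ℕ) ≠ (i:ℕ)) (h2 : (j:ℕ) ≠ (i:ℕ)+1)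
    (h3 : (i:ℕ) ≠ (j:ℕ)+1) : M23 k i j = 0 := by
  simp only [M23, if_neg h1, if_neg h2, if_neg h3]

lemma detB (k : ℕ) :
    ((M23 (k+2)).submatrix (Fin.castSucc (Fin.last k)).succAbove Fin.castSucc).det
      = (X + C (((k:ℚ)+2)/((k:ℚ)+3))) * (M23 k).det := by
  set B := (M23 (k+2)).submatrix (Fin.castSucc (Fin.last k)).succAbove Fin.castSucc with hB
  rw [Matrix.det_succ_row B (Fin.last k), Fin.sum_univ_castSucc]
  have hrow : ∀ j : Fin k, B (Fin.last k) (Fin.castSucc j) = 0 := by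
    intro j
    have hj := j.isLt
    rw [hB, Matrix.submatrix_apply, Fin.succAbove_castSucc_self]
    apply M23_zero <;> simp <;> omega
  rw [Finset.sum_eq_zero (fun j _ => by rw [hrow j]; ring)]
  have hminor : B.submatrix (Fin.last k).succAbove (Fin.last k).succAbove = M23 k := by
    apply Matrix.ext
    intro i j
    have hi := i.isLt
    simp only [hB, Fin.succAbove_last, Matrix.submatrix_apply, Matrix.submatrix_submatrix,
      Function.comp]
    rw [Fin.succAbove_of_castSucc_lt]
    · exact M23_ext _ _ _ _ rfl rfl
    · simp only [Fin.lt_def, Fin.coe_castSucc, Fin.val_last]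
      omega
  have hentry : B (Fin.last k) (Fin.last k) = X + C (((k:ℚ)+2)/((k:ℚ)+3)) := by
    rw [hB, Matrix.submatrix_apply, Fin.succAbove_castSucc_self]
    simp only [M23, Fin.val_last, Fin.coe_castSucc, Fin.val_succ]
    rw [if_neg (by omega), if_neg (by omega)]
    norm_num
  rw [hminor, hentry]
  have : (-1 : Polynomial ℚ) ^ ((Fin.last k : ℕ) + (Fin.last k : ℕ)) = 1 :=
    Even.neg_one_pow ⟨k, by simp only [Fin.val_last]⟩
  rw [this]
  ring

lemma detM_step (k : ℕ) :
    (M23 (k+2)).det =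
      -C ((k:ℚ)+2) * (M23 (k+1)).det + (C ((k:ℚ)+3) * X + C ((k:ℚ)+2)) * (M23 k).det := by
  rw [Matrix.det_succ_column (M23 (k+2)) (Fin.last (k+1))]
  rw [Fin.sum_univ_castSucc, Fin.sum_univ_castSucc]
  have hz : ∀ i : Fin k, M23 (k+2) (Fin.castSucc (Fin.castSucc i)) (Fin.last (k+1)) = 0 := by
    intro i
    have := i.isLt
    apply M23_zero <;> simp <;> omega
  rw [Finset.sum_eq_zero (fun i _ => by rw [hz i]; ring), zero_add]
  have e1 : M23 (k+2) (Fin.castSucc (Fin.last k)) (Fin.last (k+1)) = -C ((k:ℚ)+3) := by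
    simp only [M23, Fin.val_last, Fin.coe_castSucc]
    rw [if_neg (by omega)]
    norm_num
  have e2 : M23 (k+2) (Fin.last (k+1)) (Fin.last (k+1)) = -C ((k:ℚ)+2) := by
    simp only [M23, Fin.val_last]
    norm_num
    rw [map_ofNat]
    ring
  have s1 : (-1 : Polynomial ℚ) ^ ((Fin.castSucc (Fin.last k) : ℕ) + (Fin.last (k+1) : ℕ)) = -1 :=
    Odd.neg_one_pow ⟨k, by simp [Fin.val_last]; ring⟩
  have s2 : (-1 : Polynomial ℚ) ^ ((Fin.last (k+1) : ℕ) + (Fin.last (k+1) : ℕ)) = 1 :=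
    Even.neg_one_pow ⟨k+1, by simp [Fin.val_last]⟩
  rw [e1, e2, s1, s2, Fin.succAbove_last, detB,
    show (M23 (k+2)).submatrix Fin.castSucc Fin.castSucc = M23 (k+1) from M23_sub (k+1)]
  have hC : C ((k:ℚ)+3) * C (((k:ℚ)+2)/((k:ℚ)+3)) = C ((k:ℚ)+2) := by
    rw [← C_mul]
    congr 1
    field_simp
  linear_combination (M23 k).det * hC

lemma detM0 : (M23 0).det = 1 := Matrix.det_isEmpty

lemma detM1 : (M23 1).det = -1 := by
  rw [Matrix.det_fin_one]
  simp [M23]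

end

theorem stmt_18 (a : ℕ → Polynomial ℚ)
    (h2 : a 2 = Polynomial.C (1 / 2 : ℚ) * Polynomial.X)
    (h3 : a 3 = Polynomial.C (-(1 / 6) : ℚ) * Polynomial.X)
    (hrec : ∀ n : ℕ, 2 ≤ n →
      a (n + 2) =
        Polynomial.C (1 / (((n : ℚ) + 1) * ((n : ℚ) + 2))) *
            ((Polynomial.X + (Polynomial.X + 1) * Polynomial.C (n : ℚ)) * a n)
          - Polynomial.C ((n : ℚ) / ((n : ℚ) + 2)) * a (n + 1)) :
    ∀ n : ℕ, 2 ≤ n →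
      a n = Polynomial.C ((1 : ℚ) / (Nat.factorial n : ℚ)) *
              (Polynomial.X * (M23 (n - 2)).det) := by
  have key : ∀ m : ℕ, a (m+2) = C ((1:ℚ)/((m+2).factorial : ℚ)) * (X * (M23 m).det) ∧
      a (m+3) = C ((1:ℚ)/((m+3).factorial : ℚ)) * (X * (M23 (m+1)).det) := by
    intro m
    induction m with
    | zero =>
      refine ⟨?_, ?_⟩
      · rw [h2, detM0]
        norm_num
      · rw [h3, detM1]
        norm_num [Nat.factorial]
    | succ m ih =>
      refine ⟨ih.2, ?_⟩
      show a (m+2+2) = _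
      have hr := hrec (m+2) (by omega)
      rw [ih.1, ih.2] at hr
      rw [hr, show (M23 (m+2)).det =
        -C ((m:ℚ)+2) * (M23 (m+1)).det + (C ((m:ℚ)+3) * X + C ((m:ℚ)+2)) * (M23 m).det
        from detM_step m]
      have f2 : (((m+2).factorial : ℚ)) ≠ 0 := by positivity
      have f3 : (((m+1+3).factorial : ℚ)) = ((m:ℚ)+4) * (((m:ℚ)+3) * ((m+2).factorial : ℚ)) := by
        show (((m+4).factorial : ℚ)) = _
        rw [show m+4 = (m+3)+1 from rfl, Nat.factorial_succ, show m+3 = (m+2)+1 from rfl,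
          Nat.factorial_succ]
        push_cast
        ring
      have f3' : (((m+3).factorial : ℚ)) = ((m:ℚ)+3) * ((m+2).factorial : ℚ) := by
        rw [show m+3 = (m+2)+1 from rfl, Nat.factorial_succ]
        push_cast
        ring
      apply Polynomial.funext
      intro x
      simp only [eval_mul, eval_add, eval_sub, eval_C, eval_X, eval_one, eval_neg, f3, f3']
      push_cast
      field_simp
      ring
  intro n hn
  obtain ⟨m, rfl⟩ : ∃ m, n = m + 2 := ⟨n - 2, by omega⟩
  rw [Nat.add_sub_cancel]
  simpa using (key m).1
end
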